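/- (Conservativeness of observed contrasts.) Under symmetric label noise with error rate e satisfying 0 ≤ e < (K−1)/K and positive class masses, for any two measurable LLM labelers ŷ₀, ŷ₁ : Ω → Fin K evaluated against the same ground truth y and the same reference r, if the co-labeling covariance does not increase, J(ŷ₁) ≤ J(ŷ₀), and the observed contrast is nonnegative, A_R(ŷ₁) ≥ A_R(ŷ₀), then the true-agreement improvement is at least as large as the observed contrast: A_T(ŷ₁) − A_T(ŷ₀) ≥ A_R(ŷ₁) − A_R(ŷ₀). In particular the observed contrast underestimates the improvement in true agreement. -/

import Mathlib

/-!
Within each class `y = k`, the probability that `ŷ` and `r` both equal `ℓ` is the conditional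
covariance plus the product of the conditional marginals. Under symmetric noise the products
sum to `a · A_T + e/(K−1)`, so `A_R = J + a · A_T + e/(K−1)` and hence
`ΔA_R = ΔJ + a · ΔA_T ≤ a · ΔA_T`. As `ΔA_R ≥ 0` and `0 < a ≤ 1`, this forces `ΔA_T ≥ 0`,
and then `a · ΔA_T ≤ ΔA_T`.
-/

open MeasureTheory

/-- True agreement `A_T(ŷ) = μ({ŷ = y})`. -/
noncomputable def trueAgree {Ω : Type*} [MeasurableSpace Ω] {K : ℕ}
    (μ : Measure Ω) (y yhat : Ω → Fin K) : ℝ :=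
  (μ {ω | yhat ω = y ω}).toReal

/-- Reference agreement `A_R(ŷ) = μ({ŷ = r})`. -/
noncomputable def refAgree {Ω : Type*} [MeasurableSpace Ω] {K : ℕ}
    (μ : Measure Ω) (r yhat : Ω → Fin K) : ℝ :=
  (μ {ω | yhat ω = r ω}).toReal

/-- Measurement error `ε(ŷ) = 1 − A_T(ŷ)`. -/
noncomputable def measError {Ω : Type*} [MeasurableSpace Ω] {K : ℕ}
    (μ : Measure Ω) (y yhat : Ω → Fin K) : ℝ :=
  1 - trueAgree μ y yhat

/-- Co-labeling covariance
`J(ŷ) = ∑ₖ ∑ₗ [ μ({ŷ=ℓ}∩{r=ℓ}∩{y=k}) − μ({ŷ=ℓ}∩{y=k})·μ({r=ℓ}∩{y=k}) / μ({y=k}) ]`. -/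
noncomputable def coLabelCov {Ω : Type*} [MeasurableSpace Ω] {K : ℕ}
    (μ : Measure Ω) (y r yhat : Ω → Fin K) : ℝ :=
  ∑ k : Fin K, ∑ l : Fin K,
    ((μ ({ω | yhat ω = l} ∩ {ω | r ω = l} ∩ {ω | y ω = k})).toReal
      - (μ ({ω | yhat ω = l} ∩ {ω | y ω = k})).toReal
          * (μ ({ω | r ω = l} ∩ {ω | y ω = k})).toReal
          / (μ {ω | y ω = k}).toReal)

namespace MeasureTheory

variable {Ω ι : Type*} [MeasurableSpace Ω] {μ : Measure Ω} [IsFiniteMeasure μ]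
  [Fintype ι] [MeasurableSpace ι] [MeasurableSingletonClass ι] {f g : Ω → ι}

theorem measureReal_eq_sum_inter_fiber (hf : Measurable f) {S : Set Ω} (hS : MeasurableSet S) :
    μ.real S = ∑ i, μ.real (S ∩ {ω | f ω = i}) := by
  have hcover : S = ⋃ i, S ∩ {ω | f ω = i} := by
    ext ω; simp
  conv_lhs => rw [hcover]
  refine measureReal_iUnion_fintype (fun i j hij => ?_)
    fun i => hS.inter (hf (measurableSet_singleton i))
  exact Set.disjoint_left.mpr fun ω ⟨_, hi⟩ ⟨_, hj⟩ => hij (hi.symm.trans hj)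

theorem measureReal_setOf_eq_eq_sum [MeasurableEq ι] (hf : Measurable f) (hg : Measurable g) :
    μ.real {ω | f ω = g ω} = ∑ i, μ.real ({ω | f ω = i} ∩ {ω | g ω = i}) := by
  rw [measureReal_eq_sum_inter_fiber hg (measurableSet_eq_fun hf hg)]
  congr! 2 with i
  ext ω
  constructor <;> rintro ⟨h, rfl⟩ <;> exact ⟨h, rfl⟩

end MeasureTheory

-- At `s = 0` the junk value `x / 0 = 0` is harmless, since then `p = 0` too.
theorem mul_mul_div_cancel_of_le {p s t : ℝ} (hp : 0 ≤ p) (hps : p ≤ s) :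
    p * (t * s) / s = t * p := by
  rcases eq_or_ne s 0 with rfl | hs
  · simp [le_antisymm hps hp]
  · field_simp

section Agreement

variable {Ω : Type*} [MeasurableSpace Ω] {K : ℕ} {μ : Measure Ω} {y r yhat : Ω → Fin K}

-- `T l k` is the noise channel `P(r = l | y = k)`.
theorem refAgree_eq_coLabelCov_add_sum [IsFiniteMeasure μ]
    (hy : Measurable y) (hr : Measurable r) (hyhat : Measurable yhat) (T : Fin K → Fin K → ℝ)
    (hT : ∀ k l,
      μ.real ({ω | r ω = l} ∩ {ω | y ω = k}) = T l k * μ.real {ω | y ω = k}) :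
    refAgree μ r yhat = coLabelCov μ y r yhat
      + ∑ k, ∑ l, T l k * μ.real ({ω | yhat ω = l} ∩ {ω | y ω = k}) := by
  have hcancel : ∀ k l, μ.real ({ω | yhat ω = l} ∩ {ω | y ω = k})
      * μ.real ({ω | r ω = l} ∩ {ω | y ω = k}) / μ.real {ω | y ω = k}
      = T l k * μ.real ({ω | yhat ω = l} ∩ {ω | y ω = k}) := fun k l => by
    rw [hT]
    exact mul_mul_div_cancel_of_le measureReal_nonneg (measureReal_mono Set.inter_subset_right)
  have hsplit : refAgree μ r yhat = ∑ k, ∑ l,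
      μ.real ({ω | yhat ω = l} ∩ {ω | r ω = l} ∩ {ω | y ω = k}) := by
    rw [refAgree, ← measureReal_def, measureReal_setOf_eq_eq_sum hyhat hr, Finset.sum_comm]
    refine Finset.sum_congr rfl fun l _ => ?_
    exact measureReal_eq_sum_inter_fiber hy
      ((hyhat (measurableSet_singleton l)).inter (hr (measurableSet_singleton l)))
  simp only [coLabelCov, ← measureReal_def, hcancel, Finset.sum_sub_distrib, hsplit]
  ring

theorem sum_sum_ite_mul_measureReal [IsProbabilityMeasure μ] (hy : Measurable y)
    (hyhat : Measurable yhat) (d c : ℝ) :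
    ∑ k, ∑ l, (if l = k then d else c) * μ.real ({ω | yhat ω = l} ∩ {ω | y ω = k})
      = (d - c) * trueAgree μ y yhat + c := by
  have hclass :
      ∀ k, ∑ l, μ.real ({ω | yhat ω = l} ∩ {ω | y ω = k}) = μ.real {ω | y ω = k} := fun k => by
    rw [measureReal_eq_sum_inter_fiber (S := {ω | y ω = k}) hyhat
      (hy (measurableSet_singleton k))]
    simp_rw [Set.inter_comm]
  have htotal : ∑ k, μ.real {ω | y ω = k} = 1 := by
    simpa using (measureReal_eq_sum_inter_fiber (μ := μ) hy MeasurableSet.univ).symm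
  have hdiag : ∀ l k : Fin K, (if l = k then d else c) = c + if l = k then d - c else 0 :=
    fun l k => by split_ifs <;> ring
  rw [trueAgree, ← measureReal_def, measureReal_setOf_eq_eq_sum hyhat hy]
  simp only [hdiag, add_mul, ite_mul, zero_mul, Finset.sum_add_distrib, Finset.sum_ite_eq',
    Finset.mem_univ, if_true, ← Finset.mul_sum, hclass, htotal]
  ring

theorem refAgree_eq_coLabelCov_add_slope_mul [IsProbabilityMeasure μ]
    (hy : Measurable y) (hr : Measurable r) (hyhat : Measurable yhat) {e : ℝ}
    (hdiag : ∀ k,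
      μ.real ({ω | r ω = k} ∩ {ω | y ω = k}) = (1 - e) * μ.real {ω | y ω = k})
    (hoff : ∀ k l, l ≠ k →
      μ.real ({ω | r ω = l} ∩ {ω | y ω = k}) = e / ((K : ℝ) - 1) * μ.real {ω | y ω = k}) :
    refAgree μ r yhat = coLabelCov μ y r yhat
      + ((1 - e) - e / ((K : ℝ) - 1)) * trueAgree μ y yhat + e / ((K : ℝ) - 1) := by
  rw [refAgree_eq_coLabelCov_add_sum hy hr hyhat
      (fun l k => if l = k then 1 - e else e / ((K : ℝ) - 1)),
    sum_sum_ite_mul_measureReal hy hyhat, add_assoc]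
  intro k l
  split_ifs with hlk
  · exact hlk ▸ hdiag k
  · exact hoff k l hlk

end Agreement

theorem sub_sub_div_pos {K : ℕ} (hK : 2 ≤ K) {e : ℝ} (he : e < ((K : ℝ) - 1) / K) :
    0 < (1 - e) - e / ((K : ℝ) - 1) := by
  have hK' : (1 : ℝ) < K := by exact_mod_cast hK
  have hd : (K : ℝ) - 1 ≠ 0 := (sub_pos.mpr hK').ne'
  rw [lt_div_iff₀ (by linarith)] at he
  have hslope : (1 - e) - e / ((K : ℝ) - 1) = ((K - 1) - e * K) / ((K : ℝ) - 1) := by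
    field_simp
    ring
  rw [hslope]
  exact div_pos (by linarith) (by linarith)

theorem le_of_le_mul_of_le_one {x a t : ℝ} (hx : 0 ≤ x) (hxa : x ≤ a * t) (ha : 0 < a)
    (ha1 : a ≤ 1) : x ≤ t :=
  hxa.trans (mul_le_of_le_one_left (nonneg_of_mul_nonneg_right (hx.trans hxa) ha) ha1)

theorem observed_contrast_conservative_general
    {Ω : Type*} [MeasurableSpace Ω] {K : ℕ} (hK : 2 ≤ K)
    (e : ℝ) (he0 : 0 ≤ e) (he1 : e < ((K : ℝ) - 1) / K)
    (μ : Measure Ω) [IsProbabilityMeasure μ]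
    (y r : Ω → Fin K) (hy : Measurable y) (hr : Measurable r)
    (hnoise_diag : ∀ k : Fin K,
      (μ ({ω | r ω = k} ∩ {ω | y ω = k})).toReal
        = (1 - e) * (μ {ω | y ω = k}).toReal)
    (hnoise_off : ∀ k l : Fin K, l ≠ k →
      (μ ({ω | r ω = l} ∩ {ω | y ω = k})).toReal
        = e / ((K : ℝ) - 1) * (μ {ω | y ω = k}).toReal)
    (yhat₀ yhat₁ : Ω → Fin K) (hyhat₀ : Measurable yhat₀) (hyhat₁ : Measurable yhat₁) :
    coLabelCov μ y r yhat₁ ≤ coLabelCov μ y r yhat₀ →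
    refAgree μ r yhat₀ ≤ refAgree μ r yhat₁ →
    refAgree μ r yhat₁ - refAgree μ r yhat₀
      ≤ trueAgree μ y yhat₁ - trueAgree μ y yhat₀ := by
  intro hJ hR
  have hslope_le : (1 - e) - e / ((K : ℝ) - 1) ≤ 1 := by
    have hK' : (1 : ℝ) ≤ K := by exact_mod_cast (by omega : 1 ≤ K)
    have := div_nonneg he0 (sub_nonneg.mpr hK')
    linarith
  refine le_of_le_mul_of_le_one (sub_nonneg.mpr hR) ?_ (sub_sub_div_pos hK he1) hslope_le
  rw [refAgree_eq_coLabelCov_add_slope_mul hy hr hyhat₀ hnoise_diag hnoise_off,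
    refAgree_eq_coLabelCov_add_slope_mul hy hr hyhat₁ hnoise_diag hnoise_off]
  linarith

/-- **conservativeness of observed contrasts.** Under symmetric
label noise with `0 ≤ e < (K−1)/K` and positive class masses, for labelers
`ŷ₀, ŷ₁` against the same `y` and `r`, if `J(ŷ₁) ≤ J(ŷ₀)` and
`A_R(ŷ₁) ≥ A_R(ŷ₀)`, then `A_T(ŷ₁) − A_T(ŷ₀) ≥ A_R(ŷ₁) − A_R(ŷ₀)`. -/
theorem observed_contrast_conservative
    {Ω : Type*} [MeasurableSpace Ω] {K : ℕ} (hK : 2 ≤ K)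
    (e : ℝ) (he0 : 0 ≤ e) (he1 : e < ((K : ℝ) - 1) / K)
    (μ : Measure Ω) [IsProbabilityMeasure μ]
    (y r : Ω → Fin K) (hy : Measurable y) (hr : Measurable r)
    (hnoise_diag : ∀ k : Fin K,
      (μ ({ω | r ω = k} ∩ {ω | y ω = k})).toReal
        = (1 - e) * (μ {ω | y ω = k}).toReal)
    (hnoise_off : ∀ k l : Fin K, l ≠ k →
      (μ ({ω | r ω = l} ∩ {ω | y ω = k})).toReal
        = e / ((K : ℝ) - 1) * (μ {ω | y ω = k}).toReal)
    (hpos : ∀ k : Fin K, 0 < μ {ω | y ω = k})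
    (yhat₀ yhat₁ : Ω → Fin K) (hyhat₀ : Measurable yhat₀) (hyhat₁ : Measurable yhat₁) :
    coLabelCov μ y r yhat₁ ≤ coLabelCov μ y r yhat₀ →
    refAgree μ r yhat₀ ≤ refAgree μ r yhat₁ →
    refAgree μ r yhat₁ - refAgree μ r yhat₀
      ≤ trueAgree μ y yhat₁ - trueAgree μ y yhat₀ :=
  observed_contrast_conservative_general hK e he0 he1 μ y r hy hr hnoise_diag hnoise_off yhat₀ yhat₁
    hyhat₀ hyhat₁
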